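/- Under the standing assumptions on A, F, h, g, let K ⊆ ℝ^N be a proper cone and λ ∈ int(K*). For each (x,t) ∈ ℝ^n × (0,T), the set S_{x,t} := closure{C_{x,t}[α] : α ∈ 𝒜} ⊆ ℝ^N is nonempty and compact, and there exists a point ξ ∈ S_{x,t} such that λ·ξ = inf_{α ∈ 𝒜} λ·C_{x,t}[α] and ξ is a Pareto minimal of S_{x,t} with respect to the ordering ≤_K. In particular, for each λ ∈ int(K*) there exists a vectorial value map u^λ : ℝ^n × (0,T) → ℝ^N such that u^λ(x,t) ∈ S_{x,t} is a Pareto minimal of S_{x,t} and λ·u^λ(x,t) = inf_{α ∈ 𝒜} λ·C_{x,t}[α] for every (x,t). -/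

import Mathlib

/-!
A constant control and the Picard–Lindelöf theorem give one admissible trajectory, so
the cost set is nonempty, and since all costs are bounded by `C + C (T - t)` its closure is
compact. The continuous functional `ξ ↦ λ·ξ` attains its minimum on that closure, at the value
`inf_α λ·C_{x,t}[α]`. Such a minimiser is Pareto minimal: if `ξ - η ∈ K` then `λ·(ξ - η) = 0`,
and because `λ` is interior to `K*` the functional `λ - ε (ξ - η)` is still in `K*` for small
`ε > 0`, which forces `ε ‖ξ - η‖² ≤ 0`.
-/

open MeasureTheory Set
open scoped InnerProductSpace

noncomputable section

/-- Admissible controls: measurable maps taking values in `A` a.e. on `(0,T)`. -/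
def IsAdmissible {m : ℕ} (T : ℝ) (A : Set (EuclideanSpace ℝ (Fin m)))
    (α : ℝ → EuclideanSpace ℝ (Fin m)) : Prop :=
  Measurable α ∧ ∀ᵐ s ∂(volume.restrict (Set.Ioo 0 T)), α s ∈ A

/-- `χ` is the controlled trajectory on `[t,T]` started at `x` with control `α`:
a continuous solution of the integral equation `χ(s) = x + ∫_t^s F(χ(r), α(r)) dr`. -/
def IsTrajectory {n m : ℕ} (T : ℝ)
    (F : EuclideanSpace ℝ (Fin n) → EuclideanSpace ℝ (Fin m) → EuclideanSpace ℝ (Fin n))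
    (x : EuclideanSpace ℝ (Fin n)) (t : ℝ) (α : ℝ → EuclideanSpace ℝ (Fin m))
    (χ : ℝ → EuclideanSpace ℝ (Fin n)) : Prop :=
  ContinuousOn χ (Set.Icc t T) ∧
    ∀ s ∈ Set.Icc t T, χ s = x + ∫ r in t..s, F (χ r) (α r)

/-- The vectorial cost `C_{x,t}[α] = g(χ(T)) + ∫_t^T h(χ(s), α(s)) ds`. -/
def vectCost {n m N : ℕ} (T : ℝ)
    (h : EuclideanSpace ℝ (Fin n) → EuclideanSpace ℝ (Fin m) → EuclideanSpace ℝ (Fin N))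
    (g : EuclideanSpace ℝ (Fin n) → EuclideanSpace ℝ (Fin N))
    (t : ℝ) (α : ℝ → EuclideanSpace ℝ (Fin m)) (χ : ℝ → EuclideanSpace ℝ (Fin n)) :
    EuclideanSpace ℝ (Fin N) :=
  g (χ T) + ∫ s in t..T, h (χ s) (α s)

/-- The set of achievable vectorial costs `{C_{x,t}[α] : α ∈ 𝒜}`. -/
def costSet {n m N : ℕ} (T : ℝ) (A : Set (EuclideanSpace ℝ (Fin m)))
    (F : EuclideanSpace ℝ (Fin n) → EuclideanSpace ℝ (Fin m) → EuclideanSpace ℝ (Fin n))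
    (h : EuclideanSpace ℝ (Fin n) → EuclideanSpace ℝ (Fin m) → EuclideanSpace ℝ (Fin N))
    (g : EuclideanSpace ℝ (Fin n) → EuclideanSpace ℝ (Fin N))
    (x : EuclideanSpace ℝ (Fin n)) (t : ℝ) : Set (EuclideanSpace ℝ (Fin N)) :=
  {c | ∃ (α : ℝ → EuclideanSpace ℝ (Fin m)) (χ : ℝ → EuclideanSpace ℝ (Fin n)),
    IsAdmissible T A α ∧ IsTrajectory T F x t α χ ∧ c = vectCost T h g t α χ}

open Filter Topology
open scoped NNReal Interval

theorem LipschitzWith.exists_continuousOn_eq_add_integral {E : Type*} [NormedAddCommGroup E]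
    [NormedSpace ℝ E] [CompleteSpace E] {f : E → E} {K : ℝ≥0} (hf : LipschitzWith K f) {M : ℝ}
    (hM : ∀ y, ‖f y‖ ≤ M) (x : E) {t T : ℝ} (htT : t ≤ T) :
    ∃ χ : ℝ → E, ContinuousOn χ (Icc t T) ∧ ∀ s ∈ Icc t T, χ s = x + ∫ r in t..s, f (χ r) := by
  have hM₀ : 0 ≤ M := (norm_nonneg _).trans (hM x)
  have hpl : IsPicardLindelof (fun _ ↦ f) (tmin := t) (tmax := T) ⟨t, left_mem_Icc.2 htT⟩ x
      ⟨M * (T - t), mul_nonneg hM₀ (sub_nonneg.2 htT)⟩ 0 ⟨M, hM₀⟩ K :=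
    .of_time_independent (fun y _ ↦ hM y) hf.lipschitzOnWith (by simp [htT]; exact le_rfl)
  obtain ⟨χ, hχt, hχ⟩ := hpl.exists_eq_forall_mem_Icc_hasDerivWithinAt₀
  have hcont : ContinuousOn χ (Icc t T) := fun s hs ↦ (hχ s hs).continuousWithinAt
  refine ⟨χ, hcont, fun s hs ↦ ?_⟩
  have hcont_s : ContinuousOn χ (Icc t s) := hcont.mono (Icc_subset_Icc_right hs.2)
  rw [intervalIntegral.integral_eq_sub_of_hasDeriv_right_of_le hs.1 hcont_s
    (fun r hr ↦ ((hχ r (Ioo_subset_Icc_self ⟨hr.1, hr.2.trans_le hs.2⟩)).hasDerivAt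
      (Icc_mem_nhds hr.1 (hr.2.trans_le hs.2))).hasDerivWithinAt)
    (hf.continuous.comp_continuousOn (uIcc_of_le hs.1 ▸ hcont_s)).intervalIntegrable]
  simp only [hχt, add_sub_cancel]

section costSet

variable {n m N : ℕ} {T : ℝ} {A : Set (EuclideanSpace ℝ (Fin m))}
  {F : EuclideanSpace ℝ (Fin n) → EuclideanSpace ℝ (Fin m) → EuclideanSpace ℝ (Fin n)}
  {h : EuclideanSpace ℝ (Fin n) → EuclideanSpace ℝ (Fin m) → EuclideanSpace ℝ (Fin N)}
  {g : EuclideanSpace ℝ (Fin n) → EuclideanSpace ℝ (Fin N)}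

theorem costSet_nonempty {a₀ : EuclideanSpace ℝ (Fin m)} (ha₀ : a₀ ∈ A) {K : ℝ≥0}
    (hF : LipschitzWith K (F · a₀)) {M : ℝ} (hM : ∀ y, ‖F y a₀‖ ≤ M)
    (x : EuclideanSpace ℝ (Fin n)) {t : ℝ} (htT : t ≤ T) :
    (costSet T A F h g x t).Nonempty := by
  obtain ⟨χ, hχ⟩ := hF.exists_continuousOn_eq_add_integral hM x htT
  exact ⟨_, fun _ ↦ a₀, χ, ⟨measurable_const, .of_forall fun _ ↦ ha₀⟩, hχ, rfl⟩

theorem norm_vectCost_le {Mh Mg : ℝ} (hh : ∀ y, ∀ a ∈ A, ‖h y a‖ ≤ Mh) (hg : ∀ y, ‖g y‖ ≤ Mg)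
    {α : ℝ → EuclideanSpace ℝ (Fin m)} (hα : IsAdmissible T A α)
    (χ : ℝ → EuclideanSpace ℝ (Fin n)) {t : ℝ} (ht : 0 ≤ t) (htT : t ≤ T) :
    ‖vectCost T h g t α χ‖ ≤ Mg + Mh * (T - t) := by
  have hA : ∀ᵐ s ∂volume.restrict (Ι t T), α s ∈ A := by
    rw [uIoc_of_le htT]
    refine ae_restrict_of_ae_restrict_of_subset (Ioc_subset_Ioc_left ht) ?_
    rw [← Measure.restrict_congr_set Ioo_ae_eq_Ioc]
    exact hα.2
  have hint : ‖∫ s in t..T, h (χ s) (α s)‖ ≤ Mh * |T - t| :=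
    intervalIntegral.norm_integral_le_of_norm_le_const_ae
      ((ae_restrict_iff' measurableSet_uIoc).1 (hA.mono fun s hs ↦ hh _ _ hs))
  rw [abs_of_nonneg (sub_nonneg.2 htT)] at hint
  exact (norm_add_le _ _).trans (add_le_add (hg _) hint)

theorem isCompact_closure_costSet {Mh Mg : ℝ} (hh : ∀ y, ∀ a ∈ A, ‖h y a‖ ≤ Mh)
    (hg : ∀ y, ‖g y‖ ≤ Mg) (x : EuclideanSpace ℝ (Fin n)) {t : ℝ} (ht : 0 ≤ t) (htT : t ≤ T) :
    IsCompact (closure (costSet T A F h g x t)) := by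
  refine (Metric.isBounded_closedBall (x := 0) (r := Mg + Mh * (T - t))).subset ?_
    |>.isCompact_closure
  rintro _ ⟨α, χ, hα, -, rfl⟩
  exact mem_closedBall_zero_iff.2 (norm_vectCost_le hh hg hα χ ht htT)

end costSet

theorem IsMinOn.eq_sInf_image_of_mem_closure {X : Type*} [TopologicalSpace X] {f : X → ℝ}
    (hf : Continuous f) {S : Set X} {ξ : X} (hξ : ξ ∈ closure S)
    (hmin : IsMinOn f (closure S) ξ) : f ξ = sInf (f '' S) := by
  have hlb : f ξ ∈ lowerBounds (f '' S) := by
    rintro _ ⟨c, hc, rfl⟩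
    exact hmin (subset_closure hc)
  exact (isGLB_of_mem_closure hlb (image_closure_subset_closure_image hf ⟨ξ, hξ, rfl⟩)).csInf_eq
    ((closure_nonempty_iff.1 ⟨ξ, hξ⟩).image f) |>.symm

section InnerProductSpace

variable {E : Type*} [NormedAddCommGroup E] [InnerProductSpace ℝ E] {K : Set E} {lam : E}

theorem eq_zero_of_inner_nonpos_of_mem_interior_dual
    (hlam : lam ∈ interior {l : E | ∀ ζ ∈ K, 0 ≤ ⟪l, ζ⟫_ℝ}) {ζ : E} (hζ : ζ ∈ K)
    (hle : ⟪lam, ζ⟫_ℝ ≤ 0) : ζ = 0 := by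
  have hpert : ∀ᶠ ε in 𝓝[>] (0 : ℝ), lam - ε • ζ ∈ {l : E | ∀ ζ ∈ K, 0 ≤ ⟪l, ζ⟫_ℝ} := by
    refine nhdsWithin_le_nhds ?_
    have hcont : Continuous fun ε : ℝ ↦ lam - ε • ζ := by fun_prop
    exact (hcont.tendsto' 0 lam (by simp)).eventually (mem_interior_iff_mem_nhds.1 hlam)
  obtain ⟨ε, hεK, hε⟩ := (hpert.and self_mem_nhdsWithin).exists
  have hnonneg := hεK ζ hζ
  rw [inner_sub_left, real_inner_smul_left, real_inner_self_eq_norm_sq] at hnonneg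
  have hsq : ‖ζ‖ ^ 2 ≤ 0 := by nlinarith
  exact norm_eq_zero.1 (pow_eq_zero_iff two_ne_zero |>.1 (le_antisymm hsq (sq_nonneg _)))

theorem IsMinOn.eq_of_sub_mem_of_mem_interior_dual
    (hlam : lam ∈ interior {l : E | ∀ ζ ∈ K, 0 ≤ ⟪l, ζ⟫_ℝ}) {S : Set E} {ξ η : E}
    (hmin : IsMinOn (⟪lam, ·⟫_ℝ) S ξ) (hη : η ∈ S) (hK : ξ - η ∈ K) : η = ξ := by
  have hle : ⟪lam, ξ - η⟫_ℝ ≤ 0 := by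
    rw [inner_sub_right]
    linarith [isMinOn_iff.1 hmin η hη]
  exact (sub_eq_zero.1 (eq_zero_of_inner_nonpos_of_mem_interior_dual hlam hK hle)).symm

theorem exists_paretoMin_inner_eq_sInf
    (hlam : lam ∈ interior {l : E | ∀ ζ ∈ K, 0 ≤ ⟪l, ζ⟫_ℝ}) {S : Set E} (hS : S.Nonempty)
    (hSc : IsCompact (closure S)) :
    ∃ ξ ∈ closure S, ⟪lam, ξ⟫_ℝ = sInf {r : ℝ | ∃ c ∈ S, r = ⟪lam, c⟫_ℝ} ∧
      ∀ η ∈ closure S, ξ - η ∈ K → η = ξ := by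
  have hcont : Continuous (⟪lam, ·⟫_ℝ) := by fun_prop
  obtain ⟨ξ, hξ, hmin⟩ := hSc.exists_isMinOn hS.closure hcont.continuousOn
  have himage : {r : ℝ | ∃ c ∈ S, r = ⟪lam, c⟫_ℝ} = (⟪lam, ·⟫_ℝ) '' S := by
    simp only [image, eq_comm]
  refine ⟨ξ, hξ, himage ▸ hmin.eq_sInf_image_of_mem_closure hcont hξ, fun η hη hK ↦ ?_⟩
  exact hmin.eq_of_sub_mem_of_mem_interior_dual hlam hη hK

end InnerProductSpace

theorem exists_vectorial_value_map_general
    (n m N : ℕ) (T : ℝ)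
    (A : Set (EuclideanSpace ℝ (Fin m))) (hAne : A.Nonempty)
    (F : EuclideanSpace ℝ (Fin n) → EuclideanSpace ℝ (Fin m) → EuclideanSpace ℝ (Fin n))
    (h : EuclideanSpace ℝ (Fin n) → EuclideanSpace ℝ (Fin m) → EuclideanSpace ℝ (Fin N))
    (g : EuclideanSpace ℝ (Fin n) → EuclideanSpace ℝ (Fin N))
    (C : ℝ)
    (hFbd : ∀ x, ∀ a ∈ A, ‖F x a‖ ≤ C)
    (hhbd : ∀ x, ∀ a ∈ A, ‖h x a‖ ≤ C)
    (hgbd : ∀ x, ‖g x‖ ≤ C)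
    (hFlip : ∀ x y, ∀ a ∈ A, ‖F x a - F y a‖ ≤ C * ‖x - y‖)
    (K : Set (EuclideanSpace ℝ (Fin N)))
    (lam : EuclideanSpace ℝ (Fin N))
    (hlam : lam ∈ interior {l : EuclideanSpace ℝ (Fin N) | ∀ ζ ∈ K, 0 ≤ ⟪l, ζ⟫_ℝ}) :
    (∀ x : EuclideanSpace ℝ (Fin n), ∀ t ∈ Set.Ioo (0:ℝ) T,
      (closure (costSet T A F h g x t)).Nonempty ∧
      IsCompact (closure (costSet T A F h g x t)) ∧
      ∃ ξ ∈ closure (costSet T A F h g x t),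
        ⟪lam, ξ⟫_ℝ = sInf {r : ℝ | ∃ c ∈ costSet T A F h g x t, r = ⟪lam, c⟫_ℝ} ∧
        ∀ η ∈ closure (costSet T A F h g x t), ξ - η ∈ K → η = ξ) ∧
    ∃ u : EuclideanSpace ℝ (Fin n) → ℝ → EuclideanSpace ℝ (Fin N),
      ∀ x : EuclideanSpace ℝ (Fin n), ∀ t ∈ Set.Ioo (0:ℝ) T,
        u x t ∈ closure (costSet T A F h g x t) ∧
        (∀ η ∈ closure (costSet T A F h g x t), u x t - η ∈ K → η = u x t) ∧
        ⟪lam, u x t⟫_ℝ = sInf {r : ℝ | ∃ c ∈ costSet T A F h g x t, r = ⟪lam, c⟫_ℝ} := by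
  obtain ⟨a₀, ha₀⟩ := hAne
  have hF₀ : LipschitzWith C.toNNReal (F · a₀) :=
    .of_dist_le' fun y z ↦ by simpa only [dist_eq_norm] using hFlip y z a₀ ha₀
  have hS : ∀ x, ∀ t ∈ Set.Ioo (0:ℝ) T, (costSet T A F h g x t).Nonempty ∧
      IsCompact (closure (costSet T A F h g x t)) := fun x t ht ↦
    ⟨costSet_nonempty ha₀ hF₀ (fun y ↦ hFbd y a₀ ha₀) x ht.2.le,
      isCompact_closure_costSet hhbd hgbd x ht.1.le ht.2.le⟩
  have hξ := fun x t ht ↦ exists_paretoMin_inner_eq_sInf (K := K) hlam (hS x t ht).1 (hS x t ht).2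
  refine ⟨fun x t ht ↦ ⟨(hS x t ht).1.closure, (hS x t ht).2, hξ x t ht⟩, ?_⟩
  choose! u hu using hξ
  exact ⟨u, fun x t ht ↦ ⟨(hu x t ht).1, (hu x t ht).2.2, (hu x t ht).2.1⟩⟩

/-- Under the standing assumptions, for a proper cone `K ⊆ ℝ^N` and
`λ ∈ int(K*)`: for each `(x,t) ∈ ℝ^n × (0,T)` the set `S_{x,t} = closure{C_{x,t}[α]}` is
nonempty and compact, and contains a point `ξ` with `λ·ξ = inf_α λ·C_{x,t}[α]` which is a
Pareto minimal of `S_{x,t}` w.r.t. `≤_K`; in particular there is a vectorial value map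
`u^λ` realising such Pareto minimals together with the scalarised infimum at every
`(x,t)`. -/
theorem exists_vectorial_value_map
    (n m N : ℕ) (T : ℝ) (hT : 0 < T)
    (A : Set (EuclideanSpace ℝ (Fin m))) (hAne : A.Nonempty) (hAcpt : IsCompact A)
    (F : EuclideanSpace ℝ (Fin n) → EuclideanSpace ℝ (Fin m) → EuclideanSpace ℝ (Fin n))
    (h : EuclideanSpace ℝ (Fin n) → EuclideanSpace ℝ (Fin m) → EuclideanSpace ℝ (Fin N))
    (g : EuclideanSpace ℝ (Fin n) → EuclideanSpace ℝ (Fin N))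
    (hFcont : ContinuousOn (fun p => F p.1 p.2) (Set.univ ×ˢ A))
    (hhcont : ContinuousOn (fun p => h p.1 p.2) (Set.univ ×ˢ A))
    (hgcont : Continuous g)
    (C : ℝ) (hCpos : 0 < C)
    (hFbd : ∀ x, ∀ a ∈ A, ‖F x a‖ ≤ C)
    (hhbd : ∀ x, ∀ a ∈ A, ‖h x a‖ ≤ C)
    (hgbd : ∀ x, ‖g x‖ ≤ C)
    (hFlip : ∀ x y, ∀ a ∈ A, ‖F x a - F y a‖ ≤ C * ‖x - y‖)
    (hhlip : ∀ x y, ∀ a ∈ A, ‖h x a - h y a‖ ≤ C * ‖x - y‖)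
    (hglip : ∀ x y, ‖g x - g y‖ ≤ C * ‖x - y‖)
    (K : Set (EuclideanSpace ℝ (Fin N)))
    (hclosed : IsClosed K) (hconv : Convex ℝ K)
    (hcone : ∀ t : ℝ, 0 ≤ t → ∀ ζ ∈ K, t • ζ ∈ K)
    (hintK : (interior K).Nonempty)
    (hnoline : ∀ ζ ∈ K, -ζ ∈ K → ζ = 0)
    (lam : EuclideanSpace ℝ (Fin N))
    (hlam : lam ∈ interior {l : EuclideanSpace ℝ (Fin N) | ∀ ζ ∈ K, 0 ≤ ⟪l, ζ⟫_ℝ}) :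
    (∀ x : EuclideanSpace ℝ (Fin n), ∀ t ∈ Set.Ioo (0:ℝ) T,
      (closure (costSet T A F h g x t)).Nonempty ∧
      IsCompact (closure (costSet T A F h g x t)) ∧
      ∃ ξ ∈ closure (costSet T A F h g x t),
        ⟪lam, ξ⟫_ℝ = sInf {r : ℝ | ∃ c ∈ costSet T A F h g x t, r = ⟪lam, c⟫_ℝ} ∧
        ∀ η ∈ closure (costSet T A F h g x t), ξ - η ∈ K → η = ξ) ∧
    ∃ u : EuclideanSpace ℝ (Fin n) → ℝ → EuclideanSpace ℝ (Fin N),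
      ∀ x : EuclideanSpace ℝ (Fin n), ∀ t ∈ Set.Ioo (0:ℝ) T,
        u x t ∈ closure (costSet T A F h g x t) ∧
        (∀ η ∈ closure (costSet T A F h g x t), u x t - η ∈ K → η = u x t) ∧
        ⟪lam, u x t⟫_ℝ = sInf {r : ℝ | ∃ c ∈ costSet T A F h g x t, r = ⟪lam, c⟫_ℝ} :=
  exists_vectorial_value_map_general n m N T A hAne F h g C hFbd hhbd hgbd hFlip K lam hlam
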